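/- Let σ_w > 0, a > 0, ρ = a², and let n, L be positive integers with N = nL. Let Q₀ be the Gaussian distribution N(0, σ_w²) on ℝ and Q_ρ the two-point Gaussian mixture with density q_ρ(z) = ½ φ_{a,σ_w²}(z) + ½ φ_{−a,σ_w²}(z). Then the relative entropy between the slotted mixture Q_ρ^N on ℝ^N and the product Q₀^⊗N satisfies D(Q_ρ^N ‖ Q₀^⊗N) ≤ exp(n ρ²/(2σ_w⁴) − log L). -/

import Mathlib

/-!
The relative entropy is bounded by the `χ²`-divergence, `∫ P log (P/Q) ≤ ∫ P²/Q - 1`, because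
`log x ≤ x - 1`. For the slotted mixture `P = L⁻¹ ∑ₜ Fₜ` the cross terms `∫ Fₜ Fₜ' / Q` factor over
coordinates: they equal `1` for `t ≠ t'` and `c ^ n` for `t = t'`, where `c = ∫ q_ρ² / q₀`. Hence
`∫ P²/Q - 1 = (c ^ n - 1) / L`. Completing the square in the Gaussian exponents gives
`c = cosh (ρ / σw²) ≤ exp (ρ² / (2 σw⁴))`.
-/

/-- Gaussian density with mean `m` and variance `v`. -/
noncomputable def gaussDensity (m v z : ℝ) : ℝ :=
  (1 / Real.sqrt (2 * Real.pi * v)) * Real.exp (-(z - m) ^ 2 / (2 * v))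

open MeasureTheory ProbabilityTheory Real Finset

section ChiSquare

variable {α : Type*} [MeasurableSpace α] {μ : Measure α}

theorem integral_sq_div_sub_one_nonneg {p q : α → ℝ} (hq : ∀ x, 0 < q x)
    (hp_int : Integrable p μ) (hq_int : Integrable q μ)
    (hpq_int : Integrable (fun x => p x ^ 2 / q x) μ)
    (hp1 : ∫ x, p x ∂μ = 1) (hq1 : ∫ x, q x ∂μ = 1) :
    0 ≤ ∫ x, p x ^ 2 / q x ∂μ - 1 := by
  have hsq : ∀ x, (p x - q x) ^ 2 / q x = p x ^ 2 / q x - 2 * p x + q x := fun x => by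
    field_simp [(hq x).ne']
    ring
  have hchi : ∫ x, (p x - q x) ^ 2 / q x ∂μ = ∫ x, p x ^ 2 / q x ∂μ - 1 := by
    simp only [hsq]
    have hlin : Integrable (fun x => p x ^ 2 / q x - 2 * p x) μ :=
      hpq_int.sub (hp_int.const_mul 2)
    rw [integral_add hlin hq_int, integral_sub hpq_int (hp_int.const_mul 2),
      integral_const_mul, hp1, hq1]
    ring
  rw [← hchi]
  exact integral_nonneg fun x => div_nonneg (sq_nonneg _) (hq x).le

theorem integral_mul_log_div_le_integral_sq_div_sub_one {p q : α → ℝ}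
    (hp : ∀ x, 0 ≤ p x) (hq : ∀ x, 0 < q x)
    (hp_int : Integrable p μ) (hq_int : Integrable q μ)
    (hpq_int : Integrable (fun x => p x ^ 2 / q x) μ)
    (hp1 : ∫ x, p x ∂μ = 1) (hq1 : ∫ x, q x ∂μ = 1) :
    ∫ x, p x * log (p x / q x) ∂μ ≤ ∫ x, p x ^ 2 / q x ∂μ - 1 := by
  have hpoint : ∀ x, p x * log (p x / q x) ≤ p x ^ 2 / q x - p x := fun x => by
    rcases (hp x).eq_or_lt with h | h
    · simp [← h]
    · calc p x * log (p x / q x) ≤ p x * (p x / q x - 1) :=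
            mul_le_mul_of_nonneg_left (log_le_sub_one_of_pos (div_pos h (hq x))) h.le
        _ = p x ^ 2 / q x - p x := by ring
  by_cases hint : Integrable (fun x => p x * log (p x / q x)) μ
  · calc ∫ x, p x * log (p x / q x) ∂μ ≤ ∫ x, (p x ^ 2 / q x - p x) ∂μ :=
          integral_mono hint (hpq_int.sub hp_int) hpoint
      _ = ∫ x, p x ^ 2 / q x ∂μ - 1 := by rw [integral_sub hpq_int hp_int, hp1]
  · rw [integral_undef hint]
    exact integral_sq_div_sub_one_nonneg hq hp_int hq_int hpq_int hp1 hq1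

end ChiSquare

section Mixture

variable {α ι : Type*} [MeasurableSpace α] {μ : Measure α} [Fintype ι]

theorem integral_mixture {F : ι → α → ℝ} (hint : ∀ t, Integrable (F t) μ)
    (hF : ∀ t, ∫ x, F t x ∂μ = 1) [Nonempty ι] :
    ∫ x, (1 / (Fintype.card ι : ℝ)) * ∑ t, F t x ∂μ = 1 := by
  rw [integral_const_mul, integral_finsetSum _ fun t _ => hint t]
  simp [hF]

omit [MeasurableSpace α] in
theorem mixture_sq_div (F : ι → α → ℝ) (Q : α → ℝ) (x : α) :
    ((1 / (Fintype.card ι : ℝ)) * ∑ t, F t x) ^ 2 / Q x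
      = (1 / (Fintype.card ι : ℝ)) ^ 2 * ∑ t, ∑ t', F t x * F t' x / Q x := by
  rw [mul_pow, sq (∑ t, F t x), sum_mul_sum, mul_div_assoc, sum_div]
  simp only [sum_div]

theorem integrable_mixture_sq_div {F : ι → α → ℝ} {Q : α → ℝ}
    (hint : ∀ t t', Integrable (fun x => F t x * F t' x / Q x) μ) :
    Integrable (fun x => ((1 / (Fintype.card ι : ℝ)) * ∑ t, F t x) ^ 2 / Q x) μ := by
  simp only [mixture_sq_div]
  exact (integrable_finsetSum _ fun t _ => integrable_finsetSum _ fun t' _ =>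
    hint t t').const_mul _

theorem integral_mixture_sq_div [DecidableEq ι] {F : ι → α → ℝ} {Q : α → ℝ} {c : ℝ}
    (hint : ∀ t t', Integrable (fun x => F t x * F t' x / Q x) μ)
    (hF : ∀ t t', ∫ x, F t x * F t' x / Q x ∂μ = if t = t' then c else 1) [Nonempty ι] :
    ∫ x, ((1 / (Fintype.card ι : ℝ)) * ∑ t, F t x) ^ 2 / Q x ∂μ
      = 1 + (c - 1) / Fintype.card ι := by
  have hrow : ∀ t : ι, ∑ t', (if t = t' then c else 1) = c - 1 + Fintype.card ι := fun t => by
    have hsplit : ∀ t', (if t = t' then c else 1) = (if t = t' then c - 1 else 0) + 1 :=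
      fun t' => by split_ifs <;> ring
    simp [hsplit, sum_add_distrib]
  simp only [mixture_sq_div]
  rw [integral_const_mul, integral_finsetSum _ fun t _ => integrable_finsetSum _ fun t' _ =>
    hint t t']
  simp only [integral_finsetSum _ fun t' _ => hint _ t', hF, hrow, sum_const, card_univ,
    nsmul_eq_mul]
  field_simp
  ring

end Mixture

section Slot

variable {ι κ E : Type*} [Fintype ι] [Fintype κ]

section Fubini

variable [MeasureSpace E] [SigmaFinite (volume : Measure E)]

theorem integrable_prod_prod {f : ι → E → ℝ} (hf : ∀ ℓ, Integrable (f ℓ)) :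
    Integrable fun z : ι → κ → E => ∏ ℓ, ∏ i, f ℓ (z ℓ i) :=
  Integrable.fintype_prod (f := fun ℓ (y : κ → E) => ∏ i, f ℓ (y i)) fun ℓ =>
    Integrable.fintype_prod fun _ => hf ℓ

theorem integral_prod_prod (f : ι → E → ℝ) :
    ∫ z : ι → κ → E, ∏ ℓ, ∏ i, f ℓ (z ℓ i) = ∏ ℓ, (∫ x, f ℓ x) ^ Fintype.card κ := by
  rw [integral_fintype_prod_volume_eq_prod (f := fun ℓ (y : κ → E) => ∏ i, f ℓ (y i))]
  simp only [integral_fintype_prod_volume_eq_pow]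

end Fubini

variable [DecidableEq ι]

/-- The density of the paper's `Q_{ρ,t}^N` when `p = q_ρ` and `q = q₀`. -/
noncomputable def slotDensity (p q : E → ℝ) (t : ι) (z : ι → κ → E) : ℝ :=
  ∏ ℓ, ∏ i, if ℓ = t then p (z ℓ i) else q (z ℓ i)

variable {p q : E → ℝ}

theorem slotDensity_nonneg (hp : ∀ x, 0 ≤ p x) (hq : ∀ x, 0 ≤ q x) (t : ι) (z : ι → κ → E) :
    0 ≤ slotDensity p q t z :=
  prod_nonneg fun ℓ _ => prod_nonneg fun i _ => by split_ifs <;> simp only [hp, hq]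

omit [Fintype ι] in
theorem slotFactor_eq (hq : ∀ x, q x ≠ 0) (t t' ℓ : ι) :
    (fun x => (if ℓ = t then p x else q x) * (if ℓ = t' then p x else q x) / q x)
      = if ℓ = t ∧ ℓ = t' then (fun x => p x ^ 2 / q x) else if ℓ = t ∨ ℓ = t' then p else q := by
  funext x
  rcases eq_or_ne ℓ t with rfl | h <;> rcases eq_or_ne ℓ t' with rfl | h' <;>
    simp [*, sq, mul_div_assoc]

theorem slotDensity_mul_slotDensity_div (hq : ∀ x, q x ≠ 0) (t t' : ι) (z : ι → κ → E) :
    slotDensity p q t z * slotDensity p q t' z / ∏ ℓ, ∏ i, q (z ℓ i)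
      = ∏ ℓ, ∏ i, (if ℓ = t ∧ ℓ = t' then (fun x => p x ^ 2 / q x)
          else if ℓ = t ∨ ℓ = t' then p else q) (z ℓ i) := by
  simp only [slotDensity, ← prod_mul_distrib, ← prod_div_distrib, ← slotFactor_eq hq]

variable [MeasureSpace E] [SigmaFinite (volume : Measure E)]

theorem integrable_slotDensity (hp : Integrable p) (hq : Integrable q) (t : ι) :
    Integrable (slotDensity (κ := κ) p q t) :=
  integrable_prod_prod (f := fun ℓ x => if ℓ = t then p x else q x) fun ℓ => by
    split_ifs <;> assumption

theorem integral_slotDensity (hp1 : ∫ x, p x = 1) (hq1 : ∫ x, q x = 1) (t : ι) :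
    ∫ z, slotDensity (κ := κ) p q t z = 1 := by
  unfold slotDensity
  rw [integral_prod_prod (f := fun ℓ x => if ℓ = t then p x else q x)]
  exact prod_eq_one fun ℓ _ => by split_ifs <;> simp [hp1, hq1]

theorem integrable_slotDensity_mul_slotDensity_div (hq : ∀ x, q x ≠ 0) (hp_int : Integrable p)
    (hq_int : Integrable q) (hpq_int : Integrable fun x => p x ^ 2 / q x) (t t' : ι) :
    Integrable fun z : ι → κ → E =>
      slotDensity p q t z * slotDensity p q t' z / ∏ ℓ, ∏ i, q (z ℓ i) := by
  simp only [slotDensity_mul_slotDensity_div hq]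
  exact integrable_prod_prod fun ℓ => by split_ifs <;> assumption

theorem integral_slotDensity_mul_slotDensity_div (hq : ∀ x, q x ≠ 0)
    (hp1 : ∫ x, p x = 1) (hq1 : ∫ x, q x = 1) (t t' : ι) :
    ∫ z : ι → κ → E, slotDensity p q t z * slotDensity p q t' z / ∏ ℓ, ∏ i, q (z ℓ i)
      = if t = t' then (∫ x, p x ^ 2 / q x) ^ Fintype.card κ else 1 := by
  have hfactor : ∀ ℓ, ∫ x, (if ℓ = t ∧ ℓ = t' then (fun x => p x ^ 2 / q x)
      else if ℓ = t ∨ ℓ = t' then p else q) x = if ℓ = t ∧ ℓ = t' then ∫ x, p x ^ 2 / q x else 1 :=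
    fun ℓ => by split_ifs <;> simp [hp1, hq1]
  simp only [slotDensity_mul_slotDensity_div hq, integral_prod_prod, hfactor]
  split_ifs with htt
  · subst htt
    simp [ite_pow]
  · exact prod_eq_one fun ℓ _ => by
      rw [if_neg fun h => htt (h.1.symm.trans h.2), one_pow]

theorem integral_slotMixture_mul_log_le [Nonempty ι] (hp : ∀ x, 0 ≤ p x) (hq : ∀ x, 0 < q x)
    (hp_int : Integrable p) (hq_int : Integrable q)
    (hpq_int : Integrable fun x => p x ^ 2 / q x) (hp1 : ∫ x, p x = 1) (hq1 : ∫ x, q x = 1) :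
    ∫ z : ι → κ → E, ((1 / (Fintype.card ι : ℝ)) * ∑ t, slotDensity p q t z) *
        log (((1 / (Fintype.card ι : ℝ)) * ∑ t, slotDensity p q t z) / ∏ ℓ, ∏ i, q (z ℓ i))
      ≤ ((∫ x, p x ^ 2 / q x) ^ Fintype.card κ - 1) / Fintype.card ι := by
  have hq0 : ∀ x, q x ≠ 0 := fun x => (hq x).ne'
  have hFF := integrable_slotDensity_mul_slotDensity_div (ι := ι) (κ := κ) hq0 hp_int hq_int hpq_int
  refine (integral_mul_log_div_le_integral_sq_div_sub_one
    (fun z => mul_nonneg (by positivity) (sum_nonneg fun t _ =>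
      slotDensity_nonneg hp (fun x => (hq x).le) t z))
    (fun z => prod_pos fun ℓ _ => prod_pos fun i _ => hq _)
    ((integrable_finsetSum _ fun t _ => integrable_slotDensity hp_int hq_int t).const_mul _)
    (integrable_prod_prod fun _ => hq_int)
    (integrable_mixture_sq_div hFF)
    (integral_mixture (integrable_slotDensity hp_int hq_int) (integral_slotDensity hp1 hq1))
    (by simp only [integral_prod_prod, hq1, one_pow, prod_const_one])).trans_eq ?_
  rw [integral_mixture_sq_div hFF (integral_slotDensity_mul_slotDensity_div hq0 hp1 hq1)]
  ring

end Slot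

section Gaussian

variable {v : ℝ}

theorem gaussDensity_eq_gaussianPDFReal (m : ℝ) (hv : 0 < v) :
    gaussDensity m v = gaussianPDFReal m ⟨v, hv.le⟩ := by
  funext z
  simp [gaussDensity, gaussianPDFReal, one_div]
  rfl

theorem gaussDensity_pos (m : ℝ) (hv : 0 < v) (z : ℝ) : 0 < gaussDensity m v z := by
  rw [gaussDensity_eq_gaussianPDFReal m hv]
  exact gaussianPDFReal_pos _ _ _ (NNReal.coe_pos (r := ⟨v, hv.le⟩) |>.mp hv).ne'

theorem integrable_gaussDensity (m : ℝ) (hv : 0 < v) : Integrable (gaussDensity m v) := by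
  rw [gaussDensity_eq_gaussianPDFReal m hv]
  exact integrable_gaussianPDFReal m _

theorem integral_gaussDensity (m : ℝ) (hv : 0 < v) : ∫ z, gaussDensity m v z = 1 := by
  rw [gaussDensity_eq_gaussianPDFReal m hv]
  exact integral_gaussianPDFReal_eq_one m (NNReal.coe_pos (r := ⟨v, hv.le⟩) |>.mp hv).ne'

theorem gaussDensity_mul_gaussDensity_div (m₁ m₂ : ℝ) (hv : 0 < v) (z : ℝ) :
    gaussDensity m₁ v z * gaussDensity m₂ v z / gaussDensity 0 v z
      = exp (m₁ * m₂ / v) * gaussDensity (m₁ + m₂) v z := by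
  rw [div_eq_iff (gaussDensity_pos 0 hv z).ne']
  unfold gaussDensity
  have hexp : -(z - m₁) ^ 2 / (2 * v) + -(z - m₂) ^ 2 / (2 * v)
      = m₁ * m₂ / v + (-(z - (m₁ + m₂)) ^ 2 / (2 * v) + -(z - 0) ^ 2 / (2 * v)) := by
    field_simp
    ring
  rw [mul_mul_mul_comm, ← exp_add, hexp, exp_add, exp_add]
  ring

/-- The paper's density `q_ρ` for `ρ = a²`. -/
noncomputable def symmGaussMix (a v x : ℝ) : ℝ :=
  1 / 2 * gaussDensity a v x + 1 / 2 * gaussDensity (-a) v x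

theorem symmGaussMix_nonneg (a : ℝ) (hv : 0 < v) (x : ℝ) : 0 ≤ symmGaussMix a v x := by
  unfold symmGaussMix
  have := gaussDensity_pos a hv x
  have := gaussDensity_pos (-a) hv x
  positivity

theorem integrable_symmGaussMix (a : ℝ) (hv : 0 < v) : Integrable (symmGaussMix a v) :=
  ((integrable_gaussDensity a hv).const_mul _).add ((integrable_gaussDensity (-a) hv).const_mul _)

theorem integral_symmGaussMix (a : ℝ) (hv : 0 < v) : ∫ x, symmGaussMix a v x = 1 := by
  unfold symmGaussMix
  rw [integral_add ((integrable_gaussDensity a hv).const_mul _)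
      ((integrable_gaussDensity (-a) hv).const_mul _),
    integral_const_mul, integral_const_mul, integral_gaussDensity _ hv, integral_gaussDensity _ hv]
  norm_num

theorem symmGaussMix_sq_div (a : ℝ) (hv : 0 < v) (x : ℝ) :
    symmGaussMix a v x ^ 2 / gaussDensity 0 v x
      = exp (a ^ 2 / v) / 4 * gaussDensity (a + a) v x
        + exp (-(a ^ 2 / v)) / 2 * gaussDensity (a + -a) v x
        + exp (a ^ 2 / v) / 4 * gaussDensity (-a + -a) v x := by
  have hG := (gaussDensity_pos 0 hv x).ne'
  have hexpand : symmGaussMix a v x ^ 2 / gaussDensity 0 v x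
      = 1 / 4 * (gaussDensity a v x * gaussDensity a v x / gaussDensity 0 v x)
        + 1 / 2 * (gaussDensity a v x * gaussDensity (-a) v x / gaussDensity 0 v x)
        + 1 / 4 * (gaussDensity (-a) v x * gaussDensity (-a) v x / gaussDensity 0 v x) := by
    unfold symmGaussMix
    field_simp
    ring
  rw [hexpand, gaussDensity_mul_gaussDensity_div _ _ hv, gaussDensity_mul_gaussDensity_div _ _ hv,
    gaussDensity_mul_gaussDensity_div _ _ hv, neg_mul_neg, mul_neg, neg_div, ← sq]
  ring

theorem integrable_symmGaussMix_sq_div (a : ℝ) (hv : 0 < v) :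
    Integrable fun x => symmGaussMix a v x ^ 2 / gaussDensity 0 v x := by
  simp only [symmGaussMix_sq_div a hv]
  exact (((integrable_gaussDensity _ hv).const_mul _).add
    ((integrable_gaussDensity _ hv).const_mul _)).add ((integrable_gaussDensity _ hv).const_mul _)

theorem integral_symmGaussMix_sq_div (a : ℝ) (hv : 0 < v) :
    ∫ x, symmGaussMix a v x ^ 2 / gaussDensity 0 v x = cosh (a ^ 2 / v) := by
  have hint : ∀ m c, Integrable fun x => c * gaussDensity m v x :=
    fun m c => (integrable_gaussDensity m hv).const_mul c
  have hint₂ : Integrable fun x => exp (a ^ 2 / v) / 4 * gaussDensity (a + a) v x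
      + exp (-(a ^ 2 / v)) / 2 * gaussDensity (a + -a) v x := (hint _ _).add (hint _ _)
  simp only [symmGaussMix_sq_div a hv]
  rw [integral_add hint₂ (hint _ _), integral_add (hint _ _) (hint _ _)]
  simp only [integral_const_mul, integral_gaussDensity _ hv, cosh_eq]
  ring

end Gaussian

theorem stmt2_general (σw a ρ : ℝ) (hσ : 0 < σw) (hρ : ρ = a ^ 2)
    (n L : ℕ) (hL : 0 < L) :
    (∫ z : Fin L → Fin n → ℝ,
        ((1 / (L : ℝ)) * ∑ t : Fin L, ∏ ℓ : Fin L, ∏ i : Fin n,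
            (if ℓ = t then
              (1 / 2) * gaussDensity a (σw ^ 2) (z ℓ i)
                + (1 / 2) * gaussDensity (-a) (σw ^ 2) (z ℓ i)
            else gaussDensity 0 (σw ^ 2) (z ℓ i))) *
          Real.log
            (((1 / (L : ℝ)) * ∑ t : Fin L, ∏ ℓ : Fin L, ∏ i : Fin n,
                (if ℓ = t then
                  (1 / 2) * gaussDensity a (σw ^ 2) (z ℓ i)
                    + (1 / 2) * gaussDensity (-a) (σw ^ 2) (z ℓ i)
                else gaussDensity 0 (σw ^ 2) (z ℓ i))) /
              (∏ ℓ : Fin L, ∏ i : Fin n, gaussDensity 0 (σw ^ 2) (z ℓ i))))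
      ≤ Real.exp ((n : ℝ) * ρ ^ 2 / (2 * σw ^ 4) - Real.log L) := by
  have hv : 0 < σw ^ 2 := by positivity
  have : Nonempty (Fin L) := ⟨⟨0, hL⟩⟩
  have hKL := integral_slotMixture_mul_log_le (ι := Fin L) (κ := Fin n)
    (symmGaussMix_nonneg a hv) (gaussDensity_pos 0 hv) (integrable_symmGaussMix a hv)
    (integrable_gaussDensity 0 hv) (integrable_symmGaussMix_sq_div a hv)
    (integral_symmGaussMix a hv) (integral_gaussDensity 0 hv)
  rw [Fintype.card_fin, Fintype.card_fin, integral_symmGaussMix_sq_div a hv] at hKL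
  calc _ ≤ (cosh (a ^ 2 / σw ^ 2) ^ n - 1) / L := hKL
    _ ≤ exp ((a ^ 2 / σw ^ 2) ^ 2 / 2) ^ n / L := by
      gcongr
      exact (sub_le_self _ zero_le_one).trans
        (pow_le_pow_left₀ (cosh_pos _).le (cosh_le_exp_half_sq _) n)
    _ = exp (n * ρ ^ 2 / (2 * σw ^ 4) - log L) := by
      rw [← exp_nat_mul, exp_sub, exp_log (Nat.cast_pos.mpr hL), hρ]
      congr 2
      field_simp

/-- For the AWGN eavesdropper channel with noise variance `σw²`, BPSK
amplitude `a > 0`, `ρ = a²`, the relative entropy between the slotted mixture density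
`q_ρ^N` (uniform slot among `L` slots of length `n`) and the product `q0^⊗N` is at most
`exp(n ρ²/(2σw⁴) − log L)`. Coordinates of `ℝ^N`, `N = n·L`, are modeled as
`Fin L → Fin n → ℝ` (slot × position), with Lebesgue (volume) reference measure. -/
theorem stmt2 (σw a ρ : ℝ) (hσ : 0 < σw) (ha : 0 < a) (hρ : ρ = a ^ 2)
    (n L : ℕ) (hn : 0 < n) (hL : 0 < L) :
    (∫ z : Fin L → Fin n → ℝ,
        ((1 / (L : ℝ)) * ∑ t : Fin L, ∏ ℓ : Fin L, ∏ i : Fin n,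
            (if ℓ = t then
              (1 / 2) * gaussDensity a (σw ^ 2) (z ℓ i)
                + (1 / 2) * gaussDensity (-a) (σw ^ 2) (z ℓ i)
            else gaussDensity 0 (σw ^ 2) (z ℓ i))) *
          Real.log
            (((1 / (L : ℝ)) * ∑ t : Fin L, ∏ ℓ : Fin L, ∏ i : Fin n,
                (if ℓ = t then
                  (1 / 2) * gaussDensity a (σw ^ 2) (z ℓ i)
                    + (1 / 2) * gaussDensity (-a) (σw ^ 2) (z ℓ i)
                else gaussDensity 0 (σw ^ 2) (z ℓ i))) /
              (∏ ℓ : Fin L, ∏ i : Fin n, gaussDensity 0 (σw ^ 2) (z ℓ i))))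
      ≤ Real.exp ((n : ℝ) * ρ ^ 2 / (2 * σw ^ 4) - Real.log L) :=
  stmt2_general σw a ρ hσ hρ n L hL
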